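/- Let C be a non-decomposable contingency table with normalized table C_nor = D_row^{-1/2} C D_col^{-1/2}, and let R_1,…,R_k and C_1,…,C_k be any proper k-partitions of the rows and columns of C. With R the block matrix of the relative densities ρ(R_a,C_b) and F = C − D_row R D_col, one has s_k ≤ ‖D_row^{-1/2} F D_col^{-1/2}‖, where s_k is the (k+1)-th largest singular value of C_nor (counting the trivial s_0 = 1) and ‖·‖ is the spectral norm. -/

import Mathlib

/-!
Since `R` is constant on the blocks `R_a × C_b`, the matrix `D_row^{1/2} R D_col^{1/2}` subtracted
from `C_nor` factors as `P Q` through `ℝ^k`. The span of the eigenvectors of `C_norᵀ C_nor`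
belonging to its `k + 1` largest eigenvalues has dimension `k + 1`, so it contains a unit vector
`x` with `Q x = 0`. There `C_nor - P Q` acts as `C_nor`, and `‖C_nor x‖ ≥ s_k`
(Courant–Fischer, or Weyl's inequality for singular values).
-/

open scoped BigOperators Matrix

namespace Stmt17

variable {m n : ℕ}

/-- Row sums `d_{row,i}` of the table `C`. -/
noncomputable def rowSum (C : Matrix (Fin m) (Fin n) ℝ) (i : Fin m) : ℝ := ∑ j, C i j

/-- Column sums `d_{col,j}` of the table `C`. -/
noncomputable def colSum (C : Matrix (Fin m) (Fin n) ℝ) (j : Fin n) : ℝ := ∑ i, C i j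

/-- The cut `c(X,Y)` between a row-subset `X` and a column-subset `Y`. -/
noncomputable def cut (C : Matrix (Fin m) (Fin n) ℝ) (X : Finset (Fin m))
    (Y : Finset (Fin n)) : ℝ := ∑ i ∈ X, ∑ j ∈ Y, C i j

/-- The volume `Vol(X)` of a row-subset. -/
noncomputable def volRow (C : Matrix (Fin m) (Fin n) ℝ) (X : Finset (Fin m)) : ℝ :=
  ∑ i ∈ X, rowSum C i

/-- The volume `Vol(Y)` of a column-subset. -/
noncomputable def volCol (C : Matrix (Fin m) (Fin n) ℝ) (Y : Finset (Fin n)) : ℝ :=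
  ∑ j ∈ Y, colSum C j

/-- The relative density `ρ(R_a, C_b)`. -/
noncomputable def rho (C : Matrix (Fin m) (Fin n) ℝ) (RA : Finset (Fin m))
    (CB : Finset (Fin n)) : ℝ :=
  cut C RA CB / (volRow C RA * volCol C CB)

/-- A proper `k`-partition: nonempty parts, pairwise disjoint, covering everything. -/
def IsProperPartition {N k : ℕ} (P : Fin k → Finset (Fin N)) : Prop :=
  (∀ a, (P a).Nonempty) ∧ (∀ a b, a ≠ b → Disjoint (P a) (P b)) ∧ (∀ i, ∃ a, i ∈ P a)

/-- The discrepancy `disc(C; R_1,…,R_k, C_1,…,C_k)` of `C` in the given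
proper `k`-partitions of its rows and columns. -/
noncomputable def discPart {k : ℕ} (C : Matrix (Fin m) (Fin n) ℝ)
    (R : Fin k → Finset (Fin m)) (Cc : Fin k → Finset (Fin n)) : ℝ :=
  sSup {t : ℝ | ∃ (a b : Fin k) (X : Finset (Fin m)) (Y : Finset (Fin n)),
    X ⊆ R a ∧ Y ⊆ Cc b ∧
    t = |cut C X Y - rho C (R a) (Cc b) * volRow C X * volCol C Y| /
        Real.sqrt (volRow C X * volCol C Y)}

/-- The minimum `k`-way discrepancy `disc_k(C)`. -/
noncomputable def disck (C : Matrix (Fin m) (Fin n) ℝ) (k : ℕ) : ℝ :=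
  sInf {t : ℝ | ∃ (R : Fin k → Finset (Fin m)) (Cc : Fin k → Finset (Fin n)),
    IsProperPartition R ∧ IsProperPartition Cc ∧ t = discPart C R Cc}

/-- The normalized table `C_nor = D_row^{-1/2} C D_col^{-1/2}`. -/
noncomputable def Cnor (C : Matrix (Fin m) (Fin n) ℝ) : Matrix (Fin m) (Fin n) ℝ :=
  Matrix.diagonal (fun i => (Real.sqrt (rowSum C i))⁻¹) * C *
    Matrix.diagonal (fun j => (Real.sqrt (colSum C j))⁻¹)

/-- The (unsorted) singular values of a matrix, i.e. the square roots of the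
eigenvalues of `Aᴴ A`. -/
noncomputable def svFin (A : Matrix (Fin m) (Fin n) ℝ) : Fin n → ℝ :=
  fun i => Real.sqrt ((Matrix.isHermitian_conjTranspose_mul_self A).eigenvalues i)

/-- `sval A k` is the `(k+1)`-th largest singular value of `A`
(0-indexed: `sval A 0` is the largest); it is `0` when `k ≥ n`. -/
noncomputable def sval (A : Matrix (Fin m) (Fin n) ℝ) (k : ℕ) : ℝ :=
  if h : k < n then svFin A (Tuple.sort (svFin A) (Fin.rev ⟨k, h⟩)) else 0

/-- Irreducibility of a (nonnegative) square matrix. -/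
def MatIrreducible {N : ℕ} (M : Matrix (Fin N) (Fin N) ℝ) : Prop :=
  ∀ i j, ∃ t : ℕ, 1 ≤ t ∧ 0 < (M ^ t) i j

/-- The block matrix `R` whose entries over the block `R_a × C_b` all equal
`ρ(R_a, C_b)`. -/
noncomputable def Rblk {k : ℕ} (C : Matrix (Fin m) (Fin n) ℝ)
    (R : Fin k → Finset (Fin m)) (Cc : Fin k → Finset (Fin n)) :
    Matrix (Fin m) (Fin n) ℝ :=
  Matrix.of fun i j => ∑ a, ∑ b,
    if i ∈ R a ∧ j ∈ Cc b then rho C (R a) (Cc b) else 0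

/-- The deviation matrix `F = C - D_row R D_col`. -/
noncomputable def Fmat {k : ℕ} (C : Matrix (Fin m) (Fin n) ℝ)
    (R : Fin k → Finset (Fin m)) (Cc : Fin k → Finset (Fin n)) :
    Matrix (Fin m) (Fin n) ℝ :=
  C - Matrix.diagonal (rowSum C) * Rblk C R Cc * Matrix.diagonal (colSum C)

/-- The Euclidean norm of a real vector. -/
noncomputable def enormR {N : ℕ} (v : Fin N → ℝ) : ℝ := Real.sqrt (∑ i, v i ^ 2)

/-- The spectral norm of a real matrix: the supremum of `‖A v‖` over unit vectors. -/
noncomputable def specNormR {M N : ℕ} (A : Matrix (Fin M) (Fin N) ℝ) : ℝ :=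
  sSup {t : ℝ | ∃ v : Fin N → ℝ, enormR v = 1 ∧ t = enormR (A.mulVec v)}

open Matrix WithLp

section SpectralNorm

variable {M N : ℕ}

lemma enormR_eq_norm (v : Fin N → ℝ) : enormR v = ‖toLp 2 v‖ := by
  simp [enormR, EuclideanSpace.norm_eq]

lemma specNormR_nonneg (A : Matrix (Fin M) (Fin N) ℝ) : 0 ≤ specNormR A :=
  Real.sSup_nonneg fun _ ⟨_, _, ht⟩ => ht ▸ Real.sqrt_nonneg _

lemma norm_toEuclideanLin_le_specNormR_mul (A : Matrix (Fin M) (Fin N) ℝ)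
    (x : EuclideanSpace ℝ (Fin N)) : ‖toEuclideanLin A x‖ ≤ specNormR A * ‖x‖ := by
  have hbdd : BddAbove {t : ℝ | ∃ v : Fin N → ℝ, enormR v = 1 ∧ t = enormR (A.mulVec v)} := by
    refine ⟨‖(toEuclideanLin A).toContinuousLinearMap‖, ?_⟩
    rintro _ ⟨v, hv, rfl⟩
    rw [enormR_eq_norm] at hv ⊢
    simpa [hv] using (toEuclideanLin A).toContinuousLinearMap.le_opNorm (toLp 2 v)
  rcases eq_or_ne x 0 with rfl | hx
  · simp
  have hx' : 0 < ‖x‖ := norm_pos_iff.mpr hx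
  have hunit : enormR (ofLp (‖x‖⁻¹ • x)) = 1 := by
    rw [enormR_eq_norm, toLp_ofLp, norm_smul, norm_inv, norm_norm, inv_mul_cancel₀ hx'.ne']
  have hle : ‖toEuclideanLin A (‖x‖⁻¹ • x)‖ ≤ specNormR A := by
    have := le_csSup hbdd ⟨_, hunit, rfl⟩
    rwa [enormR_eq_norm] at this
  rwa [map_smul, norm_smul, norm_inv, norm_norm, inv_mul_le_iff₀ hx', mul_comm] at hle

end SpectralNorm

section Sorting

variable {α : Type*} [LinearOrder α] {n k : ℕ}

-- `Tuple.sort` sorts increasingly, so these are the indices of the `k + 1` largest values.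
def topIdx (f : Fin n → α) (hk : k < n) : Fin (k + 1) → Fin n :=
  fun i => Tuple.sort f (Fin.rev (Fin.castLE hk i))

lemma topIdx_injective (f : Fin n → α) (hk : k < n) : Function.Injective (topIdx f hk) :=
  (Tuple.sort f).injective.comp (Fin.rev_injective.comp (Fin.castLE_injective hk))

lemma apply_sort_rev_le_apply_topIdx (f : Fin n → α) (hk : k < n) (i : Fin (k + 1)) :
    f (Tuple.sort f (Fin.rev ⟨k, hk⟩)) ≤ f (topIdx f hk i) :=
  Tuple.monotone_sort f (Fin.rev_le_rev.mpr (Nat.lt_succ_iff.mp i.2))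

end Sorting

lemma exists_ne_zero_map_sum_smul_eq_zero {K V W ι : Type*} [Field K] [AddCommGroup V]
    [Module K V] [AddCommGroup W] [Module K W] [FiniteDimensional K W] [Fintype ι]
    (v : ι → V) (f : V →ₗ[K] W) (h : Module.finrank K W < Fintype.card ι) :
    ∃ c : ι → K, c ≠ 0 ∧ f (∑ i, c i • v i) = 0 := by
  obtain ⟨c, hc, hc0⟩ := Submodule.exists_mem_ne_zero_of_ne_bot
    (LinearMap.ker_ne_bot_of_finrank_lt (f := f ∘ₗ Fintype.linearCombination K v) (by simpa))
  exact ⟨c, hc0, by simpa [Fintype.linearCombination_apply] using hc⟩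

lemma mul_norm_sq_le_inner_apply_of_orthonormal_eigenvectors {ι E : Type*} [Fintype ι]
    [NormedAddCommGroup E] [InnerProductSpace ℝ E] {v : ι → E} (hv : Orthonormal ℝ v)
    {T : E →ₗ[ℝ] E} {μ : ι → ℝ} (hT : ∀ i, T (v i) = μ i • v i) {r : ℝ} (hr : ∀ i, r ≤ μ i)
    (c : ι → ℝ) :
    r * ‖∑ i, c i • v i‖ ^ 2 ≤ inner ℝ (T (∑ i, c i • v i)) (∑ i, c i • v i) := by
  have hTx : T (∑ i, c i • v i) = ∑ i, (μ i * c i) • v i := by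
    simp only [map_sum, map_smul, hT, smul_smul, mul_comm]
  rw [hTx, ← real_inner_self_eq_norm_sq, hv.inner_sum, hv.inner_sum, Finset.mul_sum]
  refine Finset.sum_le_sum fun i _ => ?_
  simp only [conj_trivial]
  rw [mul_assoc]
  exact mul_le_mul_of_nonneg_right (hr i) (mul_self_nonneg _)

lemma norm_toEuclideanLin_sq {ι κ : Type*} [Fintype ι] [Fintype κ] [DecidableEq ι]
    [DecidableEq κ] (A : Matrix ι κ ℝ) (x : EuclideanSpace ℝ κ) :
    ‖toEuclideanLin A x‖ ^ 2 = inner ℝ (toEuclideanLin (Aᴴ * A) x) x := by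
  rw [← real_inner_self_eq_norm_sq, toLpLin_mul_same, LinearMap.comp_apply,
    toEuclideanLin_conjTranspose_eq_adjoint, LinearMap.adjoint_inner_left]

lemma toEuclideanLin_eigenvectorBasis {ι : Type*} [Fintype ι] [DecidableEq ι]
    {A : Matrix ι ι ℝ} (hA : A.IsHermitian) (j : ι) :
    toEuclideanLin A (hA.eigenvectorBasis j) = hA.eigenvalues j • hA.eigenvectorBasis j := by
  rw [toLpLin_apply, hA.mulVec_eigenvectorBasis]
  rfl

section SingularValues

variable {m n k : ℕ} (A : Matrix (Fin m) (Fin n) ℝ)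

lemma sval_nonneg (k : ℕ) : 0 ≤ sval A k := by
  unfold sval; split_ifs
  · exact Real.sqrt_nonneg _
  · exact le_rfl

lemma sq_sval_le_eigenvalues_topIdx (hk : k < n) (i : Fin (k + 1)) :
    sval A k ^ 2 ≤ (isHermitian_conjTranspose_mul_self A).eigenvalues (topIdx (svFin A) hk i) := by
  have h : sval A k ≤ svFin A (topIdx (svFin A) hk i) := by
    rw [sval, dif_pos hk]; exact apply_sort_rev_le_apply_topIdx (svFin A) hk i
  exact (Real.le_sqrt (sval_nonneg A k) (eigenvalues_conjTranspose_mul_self_nonneg A _)).mp h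

lemma exists_ne_zero_toEuclideanLin_eq_zero_sval_mul_norm_le (hk : k < n) (Q : Matrix (Fin k) (Fin n) ℝ) :
    ∃ x : EuclideanSpace ℝ (Fin n), x ≠ 0 ∧ toEuclideanLin Q x = 0 ∧
      sval A k * ‖x‖ ≤ ‖toEuclideanLin A x‖ := by
  set hM := isHermitian_conjTranspose_mul_self A
  set v := fun i => hM.eigenvectorBasis (topIdx (svFin A) hk i)
  have hv : Orthonormal ℝ v := hM.eigenvectorBasis.orthonormal.comp _ (topIdx_injective _ hk)
  obtain ⟨c, hc0, hQ⟩ := exists_ne_zero_map_sum_smul_eq_zero v (toEuclideanLin Q) (by simp)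
  have hx : ∑ i, c i • v i ≠ 0 := fun h =>
    hc0 (funext (Fintype.linearIndependent_iff.mp hv.linearIndependent c h))
  refine ⟨_, hx, hQ, ?_⟩
  have hray := mul_norm_sq_le_inner_apply_of_orthonormal_eigenvectors hv
    (fun i => toEuclideanLin_eigenvectorBasis hM _) (sq_sval_le_eigenvalues_topIdx A hk) c
  rw [← norm_toEuclideanLin_sq, ← mul_pow] at hray
  exact (pow_le_pow_iff_left₀ (mul_nonneg (sval_nonneg A k) (norm_nonneg _)) (norm_nonneg _)
    two_ne_zero).mp hray

theorem sval_le_specNormR_sub_mul (P : Matrix (Fin m) (Fin k) ℝ) (Q : Matrix (Fin k) (Fin n) ℝ) :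
    sval A k ≤ specNormR (A - P * Q) := by
  by_cases hk : k < n
  swap
  · rw [sval, dif_neg hk]
    exact specNormR_nonneg _
  obtain ⟨x, hx, hQx, hAx⟩ := exists_ne_zero_toEuclideanLin_eq_zero_sval_mul_norm_le A hk Q
  have hPQx : toEuclideanLin (A - P * Q) x = toEuclideanLin A x := by
    simp [toLpLin_mul_same, hQx]
  refine le_of_mul_le_mul_right ?_ (norm_pos_iff.mpr hx)
  calc sval A k * ‖x‖ ≤ ‖toEuclideanLin (A - P * Q) x‖ := hPQx ▸ hAx
    _ ≤ specNormR (A - P * Q) * ‖x‖ := norm_toEuclideanLin_le_specNormR_mul _ x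

end SingularValues

section Table

variable {m n k : ℕ} (C : Matrix (Fin m) (Fin n) ℝ) (R : Fin k → Finset (Fin m))
  (Cc : Fin k → Finset (Fin n))

lemma exists_Rblk_eq_mul :
    ∃ (X : Matrix (Fin m) (Fin k) ℝ) (Y : Matrix (Fin k) (Fin n) ℝ), Rblk C R Cc = X * Y := by
  refine ⟨of fun i a => if i ∈ R a then 1 else 0,
    of fun a j => ∑ b, if j ∈ Cc b then rho C (R a) (Cc b) else 0, ?_⟩
  ext i j
  simp only [Rblk, of_apply, mul_apply, ite_and, ite_mul, one_mul, zero_mul]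
  exact Finset.sum_congr rfl fun a _ => by split_ifs <;> simp

lemma exists_normalized_Fmat_eq_Cnor_sub_mul :
    ∃ (P : Matrix (Fin m) (Fin k) ℝ) (Q : Matrix (Fin k) (Fin n) ℝ),
      diagonal (fun i => (Real.sqrt (rowSum C i))⁻¹) * Fmat C R Cc *
        diagonal (fun j => (Real.sqrt (colSum C j))⁻¹) = Cnor C - P * Q := by
  obtain ⟨X, Y, hXY⟩ := exists_Rblk_eq_mul C R Cc
  refine ⟨diagonal (fun i => (Real.sqrt (rowSum C i))⁻¹) * diagonal (rowSum C) * X,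
    Y * diagonal (colSum C) * diagonal (fun j => (Real.sqrt (colSum C j))⁻¹), ?_⟩
  simp only [Fmat, hXY, Cnor, Matrix.mul_sub, Matrix.sub_mul, Matrix.mul_assoc]

end Table

theorem sk_le_spectral_norm_of_deviation_general
    (C : Matrix (Fin m) (Fin n) ℝ)
    {k : ℕ}
    (R : Fin k → Finset (Fin m)) (Cc : Fin k → Finset (Fin n)) :
    sval (Cnor C) k ≤
      specNormR (Matrix.diagonal (fun i => (Real.sqrt (rowSum C i))⁻¹) *
        Fmat C R Cc *
        Matrix.diagonal (fun j => (Real.sqrt (colSum C j))⁻¹)) := by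
  obtain ⟨P, Q, hPQ⟩ := exists_normalized_Fmat_eq_Cnor_sub_mul C R Cc
  rw [hPQ]
  exact sval_le_specNormR_sub_mul _ P Q

/-- For a non-decomposable contingency table `C` and any proper `k`-partitions
`R_1,…,R_k` of its rows and `C_1,…,C_k` of its columns, with
`F = C - D_row R D_col`, one has `s_k ≤ ‖D_row^{-1/2} F D_col^{-1/2}‖`,
where `s_k` is the `(k+1)`-th largest singular value of `C_nor`
(counting the trivial `s_0 = 1`) and `‖·‖` is the spectral norm. -/
theorem sk_le_spectral_norm_of_deviation
    (C : Matrix (Fin m) (Fin n) ℝ)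
    (hnonneg : ∀ i j, 0 ≤ C i j)
    (hsum : ∑ i, ∑ j, C i j = 1)
    (hirr : if m ≤ n then MatIrreducible (C * Cᵀ) else MatIrreducible (Cᵀ * C))
    {k : ℕ}
    (R : Fin k → Finset (Fin m)) (Cc : Fin k → Finset (Fin n))
    (hR : IsProperPartition R) (hCc : IsProperPartition Cc) :
    sval (Cnor C) k ≤
      specNormR (Matrix.diagonal (fun i => (Real.sqrt (rowSum C i))⁻¹) *
        Fmat C R Cc *
        Matrix.diagonal (fun j => (Real.sqrt (colSum C j))⁻¹)) :=
  sk_le_spectral_norm_of_deviation_general C R Cc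

end Stmt17
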